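/- Let C ≥ 1 be a real constant and let E₂, E₁, F, G, E₂′, E₁′, H : [0, ∞) → [0, ∞) be continuous functions such that for all 0 ≤ τ₁ ≤ τ₂: F(τ₂) ≤ C F(τ₁); G(τ₂) ≤ C G(τ₁); H(τ₂) ≤ C H(τ₁); E₂(τ₂) + (1/C) ∫_{τ₁}^{τ₂} E₁ ≤ E₂(τ₁) + C F(τ₁); E₁(τ₂) + (1/C) ∫_{τ₁}^{τ₂} F ≤ E₁(τ₁) + C G(τ₁); E₂′(τ₂) + (1/C) ∫_{τ₁}^{τ₂} E₁′ ≤ E₂′(τ₁) + C G(τ₁); and E₁′(τ₂) + (1/C) ∫_{τ₁}^{τ₂} G ≤ E₁′(τ₁) + C H(τ₁). Then there exists a constant C′, depending only on C, such that for all τ > 0: F(τ) ≤ C′ ( E₂(0) + F(0) + E₂′(0) + G(0) + H(0) ) / τ². -/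
import Mathlib


open MeasureTheory Set

/-- **Two-level hierarchy-to-decay lemma.**
Given continuous nonnegative `E₂, E₁, F, G, E₂', E₁', H` on `[0,∞)` satisfying, for all
`0 ≤ τ₁ ≤ τ₂`, the boundedness statements for `F, G, H` and the two-level hierarchy
estimates, there is `C'` depending only on `C` with
`F(τ) ≤ C' (E₂(0) + F(0) + E₂'(0) + G(0) + H(0))/τ²` for all `τ > 0`. -/
lemma pigeon_min {f : ℝ → ℝ} {a b : ℝ} (hab : a < b)
    (hf : ContinuousOn f (Icc a b)) :
    ∃ s ∈ Icc a b, f s * (b - a) ≤ ∫ t in a..b, f t := by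
  obtain ⟨s, hs, hmin⟩ := isCompact_Icc.exists_isMinOn ⟨a, le_refl a, hab.le⟩ hf
  refine ⟨s, hs, ?_⟩
  have h1 : (∫ _ in a..b, f s) = f s * (b - a) := by
    rw [intervalIntegral.integral_const, smul_eq_mul, mul_comm]
  have h2 : (∫ _ in a..b, f s) ≤ ∫ t in a..b, f t := by
    apply intervalIntegral.integral_mono_on hab.le intervalIntegrable_const
      (ContinuousOn.intervalIntegrable (by rwa [uIcc_of_le hab.le]))
    exact fun x hx => hmin hx
  linarith [h1 ▸ h2]

theorem two_level_hierarchy_to_decay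
    (C : ℝ) (hC : 1 ≤ C)
    (E₂ E₁ F G E₂' E₁' H : ℝ → ℝ)
    (hE₂c : ContinuousOn E₂ (Ici 0)) (hE₁c : ContinuousOn E₁ (Ici 0))
    (hFc : ContinuousOn F (Ici 0)) (hGc : ContinuousOn G (Ici 0))
    (hE₂'c : ContinuousOn E₂' (Ici 0)) (hE₁'c : ContinuousOn E₁' (Ici 0))
    (hHc : ContinuousOn H (Ici 0))
    (hE₂0 : ∀ τ, 0 ≤ τ → 0 ≤ E₂ τ) (hE₁0 : ∀ τ, 0 ≤ τ → 0 ≤ E₁ τ)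
    (hF0 : ∀ τ, 0 ≤ τ → 0 ≤ F τ) (hG0 : ∀ τ, 0 ≤ τ → 0 ≤ G τ)
    (hE₂'0 : ∀ τ, 0 ≤ τ → 0 ≤ E₂' τ) (hE₁'0 : ∀ τ, 0 ≤ τ → 0 ≤ E₁' τ)
    (hH0 : ∀ τ, 0 ≤ τ → 0 ≤ H τ)
    (hFb : ∀ τ₁ τ₂, 0 ≤ τ₁ → τ₁ ≤ τ₂ → F τ₂ ≤ C * F τ₁)
    (hGb : ∀ τ₁ τ₂, 0 ≤ τ₁ → τ₁ ≤ τ₂ → G τ₂ ≤ C * G τ₁)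
    (hHb : ∀ τ₁ τ₂, 0 ≤ τ₁ → τ₁ ≤ τ₂ → H τ₂ ≤ C * H τ₁)
    (h₂ : ∀ τ₁ τ₂, 0 ≤ τ₁ → τ₁ ≤ τ₂ →
      E₂ τ₂ + (1/C) * ∫ τ in τ₁..τ₂, E₁ τ ≤ E₂ τ₁ + C * F τ₁)
    (h₁ : ∀ τ₁ τ₂, 0 ≤ τ₁ → τ₁ ≤ τ₂ →
      E₁ τ₂ + (1/C) * ∫ τ in τ₁..τ₂, F τ ≤ E₁ τ₁ + C * G τ₁)
    (h₂' : ∀ τ₁ τ₂, 0 ≤ τ₁ → τ₁ ≤ τ₂ →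
      E₂' τ₂ + (1/C) * ∫ τ in τ₁..τ₂, E₁' τ ≤ E₂' τ₁ + C * G τ₁)
    (h₁' : ∀ τ₁ τ₂, 0 ≤ τ₁ → τ₁ ≤ τ₂ →
      E₁' τ₂ + (1/C) * ∫ τ in τ₁..τ₂, G τ ≤ E₁' τ₁ + C * H τ₁) :
    ∃ C' : ℝ, ∀ τ, 0 < τ →
      F τ ≤ C' * (E₂ 0 + F 0 + E₂' 0 + G 0 + H 0) / τ^2 := by
  have hCpos : (0:ℝ) < C := lt_of_lt_of_le one_pos hC
  set D : ℝ := E₂ 0 + F 0 + E₂' 0 + G 0 + H 0 with hDdef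
  have hE₂00 := hE₂0 0 le_rfl
  have hF00 := hF0 0 le_rfl
  have hE₂'00 := hE₂'0 0 le_rfl
  have hG00 := hG0 0 le_rfl
  have hH00 := hH0 0 le_rfl
  have hD : 0 ≤ D := by simp only [hDdef]; linarith
  -- interval integrability helper
  have hint : ∀ (f : ℝ → ℝ), ContinuousOn f (Ici 0) → ∀ a b : ℝ, 0 ≤ a → a ≤ b →
      IntervalIntegrable f volume a b := fun f hf a b ha hab =>
    ContinuousOn.intervalIntegrable (hf.mono (by
      rw [uIcc_of_le hab]
      exact fun x hx => ha.trans hx.1))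
  -- continuity on subintervals helper
  have hcont : ∀ (f : ℝ → ℝ), ContinuousOn f (Ici 0) → ∀ a b : ℝ, 0 ≤ a →
      ContinuousOn f (Icc a b) := fun f hf a b ha =>
    hf.mono (fun x hx => ha.trans hx.1)
  -- Step 1 : decay of G
  have Gclaim : ∀ τ : ℝ, 0 < τ → G τ * τ ≤ 6 * C^4 * D := by
    intro τ hτ
    by_cases hτ1 : τ ≤ 1
    · have h1 : G τ ≤ C * G 0 := hGb 0 τ le_rfl hτ.le
      have h2 : 0 ≤ G τ := hG0 τ hτ.le
      have hGD : G 0 ≤ D := by simp only [hDdef]; linarith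
      have hC4 : C ≤ 6 * C^4 := by
        have h3 := le_self_pow₀ hC (show (4:ℕ) ≠ 0 by norm_num)
        have h4 := pow_nonneg hCpos.le 4
        linarith
      calc G τ * τ ≤ G τ * 1 := mul_le_mul_of_nonneg_left hτ1 h2
        _ = G τ := by ring
        _ ≤ C * G 0 := h1
        _ ≤ C * D := mul_le_mul_of_nonneg_left hGD hCpos.le
        _ ≤ 6 * C^4 * D := by
            have e : 6 * C^4 * D - C * D = (6 * C^4 - C) * D := by ring
            linarith [mul_nonneg (sub_nonneg.2 hC4) hD]
    · push_neg at hτ1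
      have hhalf : (0:ℝ) < τ/2 := by linarith
      -- bound the integral of E₁' on [0, τ/2]
      have hI1 : (∫ t in (0:ℝ)..(τ/2), E₁' t) ≤ C * (E₂' 0 + C * G 0) := by
        have h := h₂' 0 (τ/2) le_rfl hhalf.le
        have h0 : 0 ≤ E₂' (τ/2) := hE₂'0 _ hhalf.le
        have h1 : (1/C) * (∫ t in (0:ℝ)..(τ/2), E₁' t) ≤ E₂' 0 + C * G 0 := by linarith
        have h2 := mul_le_mul_of_nonneg_left h1 hCpos.le
        calc (∫ t in (0:ℝ)..(τ/2), E₁' t)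
            = C * ((1/C) * (∫ t in (0:ℝ)..(τ/2), E₁' t)) := by field_simp
          _ ≤ C * (E₂' 0 + C * G 0) := h2
      obtain ⟨s₁, hs₁, hs₁b⟩ := pigeon_min hhalf (hcont E₁' hE₁'c 0 (τ/2) le_rfl)
      have hs₁0 : 0 ≤ s₁ := hs₁.1
      have f1 : E₁' s₁ * (τ/2) ≤ C * (E₂' 0 + C * G 0) := by
        have := hs₁b
        simp only [sub_zero] at this
        linarith
      -- bound integral of G on [s₁, τ]
      have hs₁τ : s₁ ≤ τ := hs₁.2.trans (by linarith)
      have hIG : (∫ t in s₁..τ, G t) ≤ C * (E₁' s₁ + C * H s₁) := by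
        have h := h₁' s₁ τ hs₁0 hs₁τ
        have h0 : 0 ≤ E₁' τ := hE₁'0 _ hτ.le
        have h1 : (1/C) * (∫ t in s₁..τ, G t) ≤ E₁' s₁ + C * H s₁ := by linarith
        have h2 := mul_le_mul_of_nonneg_left h1 hCpos.le
        calc (∫ t in s₁..τ, G t)
            = C * ((1/C) * (∫ t in s₁..τ, G t)) := by field_simp
          _ ≤ C * (E₁' s₁ + C * H s₁) := h2
      have hIG2 : (∫ t in (τ/2)..τ, G t) ≤ ∫ t in s₁..τ, G t := by
        have hsplit := intervalIntegral.integral_add_adjacent_intervals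
          (hint G hGc s₁ (τ/2) hs₁0 hs₁.2) (hint G hGc (τ/2) τ hhalf.le (by linarith))
        have hpos : 0 ≤ ∫ t in s₁..(τ/2), G t :=
          intervalIntegral.integral_nonneg hs₁.2 (fun x hx => hG0 x (hs₁0.trans hx.1))
        linarith
      obtain ⟨s₂, hs₂, hs₂b⟩ := pigeon_min (show τ/2 < τ by linarith)
        (hcont G hGc (τ/2) τ hhalf.le)
      have f2 : G s₂ * (τ/2) ≤ C * (E₁' s₁ + C * H s₁) := by
        have : τ - τ/2 = τ/2 := by ring
        rw [this] at hs₂b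
        linarith
      have f3 : H s₁ ≤ C * H 0 := hHb 0 s₁ le_rfl hs₁0
      have f4 : G τ ≤ C * G s₂ := hGb s₂ τ (hhalf.le.trans hs₂.1) hs₂.2
      -- combine
      have hE₁'s₁ : 0 ≤ E₁' s₁ := hE₁'0 _ hs₁0
      have b1 : E₁' s₁ ≤ 2 * C * (E₂' 0 + C * G 0) := by
        have u : E₁' s₁ * (1/2) ≤ E₁' s₁ * (τ/2) :=
          mul_le_mul_of_nonneg_left (by linarith) hE₁'s₁
        linarith
      have b2 : G s₂ * τ ≤ 2 * C * E₁' s₁ + 2 * C^2 * H s₁ := by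
        have e1 : G s₂ * τ = 2 * (G s₂ * (τ/2)) := by ring
        have e2 : 2 * (C * (E₁' s₁ + C * H s₁)) = 2 * C * E₁' s₁ + 2 * C^2 * H s₁ := by
          ring
        linarith
      have b3 : G τ * τ ≤ C * (G s₂ * τ) := by
        have u := mul_le_mul_of_nonneg_right f4 hτ.le
        have e : C * G s₂ * τ = C * (G s₂ * τ) := by ring
        linarith
      have b4 : C * (G s₂ * τ) ≤ C * (2 * C * E₁' s₁ + 2 * C^2 * H s₁) :=
        mul_le_mul_of_nonneg_left b2 hCpos.le
      calc G τ * τ ≤ C * (G s₂ * τ) := b3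
        _ ≤ C * (2 * C * E₁' s₁ + 2 * C^2 * H s₁) := b4
        _ = 2 * C^2 * E₁' s₁ + 2 * C^3 * H s₁ := by ring
        _ ≤ 2 * C^2 * (2 * C * (E₂' 0 + C * G 0)) + 2 * C^3 * (C * H 0) := by
            have u1 := mul_le_mul_of_nonneg_left b1 (by positivity : (0:ℝ) ≤ 2 * C^2)
            have u2 := mul_le_mul_of_nonneg_left f3 (by positivity : (0:ℝ) ≤ 2 * C^3)
            linarith
        _ = 4 * C^3 * E₂' 0 + 4 * C^4 * G 0 + 2 * C^4 * H 0 := by ring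
        _ ≤ 6 * C^4 * D := by
            have expand : 6 * C^4 * D - (4 * C^3 * E₂' 0 + 4 * C^4 * G 0 + 2 * C^4 * H 0)
                = 6 * (C^4 * E₂ 0) + 6 * (C^4 * F 0) + 2 * (C^4 * E₂' 0)
                  + 4 * (C^3 * (C - 1) * E₂' 0) + 2 * (C^4 * G 0) + 4 * (C^4 * H 0) := by
              simp only [hDdef]; ring
            linarith [mul_nonneg (mul_nonneg (pow_nonneg hCpos.le 3)
                (sub_nonneg.2 hC)) hE₂'00,
              mul_nonneg (pow_nonneg hCpos.le 4) hE₂00,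
              mul_nonneg (pow_nonneg hCpos.le 4) hF00,
              mul_nonneg (pow_nonneg hCpos.le 4) hE₂'00,
              mul_nonneg (pow_nonneg hCpos.le 4) hG00,
              mul_nonneg (pow_nonneg hCpos.le 4) hH00]
  -- Step 2 : decay of F
  refine ⟨56 * C^7, fun τ hτ => ?_⟩
  rw [div_eq_mul_inv]
  rw [show 56 * C^7 * D * (τ^2)⁻¹ = 56 * C^7 * D / τ^2 by ring,
    le_div_iff₀ (by positivity)]
  by_cases hτ1 : τ ≤ 1
  · have h1 : F τ ≤ C * F 0 := hFb 0 τ le_rfl hτ.le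
    have h2 : 0 ≤ F τ := hF0 τ hτ.le
    have hFD : F 0 ≤ D := by simp only [hDdef]; linarith
    have hττ : τ^2 ≤ 1 := pow_le_one₀ hτ.le hτ1
    have hC7 : C ≤ 56 * C^7 := by
      have h3 := le_self_pow₀ hC (show (7:ℕ) ≠ 0 by norm_num)
      have h4 := pow_nonneg hCpos.le 7
      linarith
    calc F τ * τ^2 ≤ F τ * 1 := mul_le_mul_of_nonneg_left hττ h2
      _ = F τ := by ring
      _ ≤ C * F 0 := h1
      _ ≤ C * D := mul_le_mul_of_nonneg_left hFD hCpos.le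
      _ ≤ 56 * C^7 * D := by
          have e : 56 * C^7 * D - C * D = (56 * C^7 - C) * D := by ring
          linarith [mul_nonneg (sub_nonneg.2 hC7) hD]
  · push_neg at hτ1
    have hq : (0:ℝ) < τ/4 := by linarith
    have hqh : τ/4 < τ/2 := by linarith
    have hhalf : (0:ℝ) < τ/2 := by linarith
    -- integral of E₁ on [0, τ/2] bounded
    have hI1 : (∫ t in (0:ℝ)..(τ/2), E₁ t) ≤ C * (E₂ 0 + C * F 0) := by
      have h := h₂ 0 (τ/2) le_rfl hhalf.le
      have h0 : 0 ≤ E₂ (τ/2) := hE₂0 _ hhalf.le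
      have h1 : (1/C) * (∫ t in (0:ℝ)..(τ/2), E₁ t) ≤ E₂ 0 + C * F 0 := by linarith
      have h2 := mul_le_mul_of_nonneg_left h1 hCpos.le
      calc (∫ t in (0:ℝ)..(τ/2), E₁ t)
          = C * ((1/C) * (∫ t in (0:ℝ)..(τ/2), E₁ t)) := by field_simp
        _ ≤ C * (E₂ 0 + C * F 0) := h2
    have hI1' : (∫ t in (τ/4)..(τ/2), E₁ t) ≤ C * (E₂ 0 + C * F 0) := by
      have hsplit := intervalIntegral.integral_add_adjacent_intervals
        (hint E₁ hE₁c 0 (τ/4) le_rfl hq.le) (hint E₁ hE₁c (τ/4) (τ/2) hq.le hqh.le)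
      have hpos : 0 ≤ ∫ t in (0:ℝ)..(τ/4), E₁ t :=
        intervalIntegral.integral_nonneg hq.le (fun x hx => hE₁0 x hx.1)
      linarith
    obtain ⟨s₁, hs₁, hs₁b⟩ := pigeon_min hqh (hcont E₁ hE₁c (τ/4) (τ/2) hq.le)
    have hs₁0 : 0 ≤ s₁ := hq.le.trans hs₁.1
    have g1 : E₁ s₁ * (τ/4) ≤ C * (E₂ 0 + C * F 0) := by
      have : τ/2 - τ/4 = τ/4 := by ring
      rw [this] at hs₁b
      linarith
    -- G at s₁
    have hGs₁ : G s₁ * s₁ ≤ 6 * C^4 * D := Gclaim s₁ (lt_of_lt_of_le hq hs₁.1)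
    have hGs₁0 : 0 ≤ G s₁ := hG0 _ hs₁0
    have g2 : G s₁ * τ ≤ 24 * C^4 * D := by
      have u : G s₁ * τ ≤ G s₁ * (4 * s₁) :=
        mul_le_mul_of_nonneg_left (by linarith [hs₁.1]) hGs₁0
      have e : G s₁ * (4 * s₁) = 4 * (G s₁ * s₁) := by ring
      linarith
    -- integral of F on [s₁, τ]
    have hs₁τ : s₁ ≤ τ := hs₁.2.trans (by linarith)
    have hIF : (∫ t in s₁..τ, F t) ≤ C * (E₁ s₁ + C * G s₁) := by
      have h := h₁ s₁ τ hs₁0 hs₁τ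
      have h0 : 0 ≤ E₁ τ := hE₁0 _ hτ.le
      have h1 : (1/C) * (∫ t in s₁..τ, F t) ≤ E₁ s₁ + C * G s₁ := by linarith
      have h2 := mul_le_mul_of_nonneg_left h1 hCpos.le
      calc (∫ t in s₁..τ, F t)
          = C * ((1/C) * (∫ t in s₁..τ, F t)) := by field_simp
        _ ≤ C * (E₁ s₁ + C * G s₁) := h2
    have hIF2 : (∫ t in (τ/2)..τ, F t) ≤ ∫ t in s₁..τ, F t := by
      have hsplit := intervalIntegral.integral_add_adjacent_intervals
        (hint F hFc s₁ (τ/2) hs₁0 hs₁.2) (hint F hFc (τ/2) τ hhalf.le (by linarith))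
      have hpos : 0 ≤ ∫ t in s₁..(τ/2), F t :=
        intervalIntegral.integral_nonneg hs₁.2 (fun x hx => hF0 x (hs₁0.trans hx.1))
      linarith
    obtain ⟨s₂, hs₂, hs₂b⟩ := pigeon_min (show τ/2 < τ by linarith)
      (hcont F hFc (τ/2) τ hhalf.le)
    have g3 : F s₂ * (τ/2) ≤ C * (E₁ s₁ + C * G s₁) := by
      have : τ - τ/2 = τ/2 := by ring
      rw [this] at hs₂b
      linarith
    have g4 : F τ ≤ C * F s₂ := hFb s₂ τ (hhalf.le.trans hs₂.1) hs₂.2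
    -- combine
    have hE₁s₁ : 0 ≤ E₁ s₁ := hE₁0 _ hs₁0
    have c1 : F s₂ * τ^2 ≤ 2 * C * (E₁ s₁ * τ) + 2 * C^2 * (G s₁ * τ) := by
      have u := mul_le_mul_of_nonneg_right g3 (by positivity : (0:ℝ) ≤ 2 * τ)
      have e1 : F s₂ * (τ/2) * (2 * τ) = F s₂ * τ^2 := by ring
      have e2 : C * (E₁ s₁ + C * G s₁) * (2 * τ)
          = 2 * C * (E₁ s₁ * τ) + 2 * C^2 * (G s₁ * τ) := by ring
      linarith
    have c2 : E₁ s₁ * τ ≤ 4 * C * (E₂ 0 + C * F 0) := by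
      have u : E₁ s₁ * (1/4) ≤ E₁ s₁ * (τ/4) :=
        mul_le_mul_of_nonneg_left (by linarith) hE₁s₁
      have e : E₁ s₁ * τ = 4 * (E₁ s₁ * (τ/4)) := by ring
      have u2 : E₁ s₁ * (τ/4) ≤ E₁ s₁ * (τ/4) * τ := by
        have := mul_le_mul_of_nonneg_left hτ1.le (mul_nonneg hE₁s₁ (by linarith : (0:ℝ) ≤ τ/4))
        linarith [mul_one (E₁ s₁ * (τ/4))]
      linarith
    have c3 : F τ * τ^2 ≤ C * (F s₂ * τ^2) := by
      have u := mul_le_mul_of_nonneg_right g4 (by positivity : (0:ℝ) ≤ τ^2)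
      have e : C * F s₂ * τ^2 = C * (F s₂ * τ^2) := by ring
      linarith
    calc F τ * τ^2 ≤ C * (F s₂ * τ^2) := c3
      _ ≤ C * (2 * C * (E₁ s₁ * τ) + 2 * C^2 * (G s₁ * τ)) :=
          mul_le_mul_of_nonneg_left c1 hCpos.le
      _ = 2 * C^2 * (E₁ s₁ * τ) + 2 * C^3 * (G s₁ * τ) := by ring
      _ ≤ 2 * C^2 * (4 * C * (E₂ 0 + C * F 0)) + 2 * C^3 * (24 * C^4 * D) := by
          have u1 := mul_le_mul_of_nonneg_left c2 (by positivity : (0:ℝ) ≤ 2 * C^2)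
          have u2 := mul_le_mul_of_nonneg_left g2 (by positivity : (0:ℝ) ≤ 2 * C^3)
          linarith
      _ = 8 * C^3 * E₂ 0 + 8 * C^4 * F 0 + 48 * C^7 * D := by ring
      _ ≤ 56 * C^7 * D := by
          have p1 : C^3 ≤ C^7 := pow_le_pow_right₀ hC (by norm_num)
          have p2 : C^4 ≤ C^7 := pow_le_pow_right₀ hC (by norm_num)
          have q1 := mul_nonneg (sub_nonneg.2 p1) hE₂00
          have q2 := mul_nonneg (sub_nonneg.2 p2) hF00
          have q3 := mul_nonneg (pow_nonneg hCpos.le 7) hE₂'00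
          have q4 := mul_nonneg (pow_nonneg hCpos.le 7) hG00
          have q5 := mul_nonneg (pow_nonneg hCpos.le 7) hH00
          have expand : 56 * C^7 * D - (8 * C^3 * E₂ 0 + 8 * C^4 * F 0 + 48 * C^7 * D)
              = 8 * ((C^7 - C^3) * E₂ 0) + 8 * ((C^7 - C^4) * F 0)
                + 8 * (C^7 * E₂' 0) + 8 * (C^7 * G 0) + 8 * (C^7 * H 0) := by
            simp only [hDdef]; ring
          linarith
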